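/- Let K be a convex weak*-compact subset of a dual Banach space X* and let η be a homogeneous (η(λA) = |λ| η(A)) and translation-invariant (η(A + x*) = η(A)) measure of non-compactness on X*. Then: (i) for every ε > 0 and every ordinal α, ½ [η]^α_ε(K) + ½ K ⊆ [η]^α_{ε/2}(K); (ii) for every ε > 0, every n ∈ ℕ and every ordinal α, [η]^α_ε(K) ⊆ [η]^{α·2^n}_{ε/2^n}(K). -/

import Mathlib

/-
For `y ∈ K` the map `t ↦ ½ t + ½ y` is continuous, sends `K` into `K` by convexity, and halves
`η` by homogeneity and translation invariance; so it sends `ε`-fragments to `ε/2`-fragments,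
and by transfinite induction `[η]^α_ε(K)` into `[η]^α_{ε/2}(K)`, which is (i). For (ii), a point
`x ∈ [η]^α_ε(K)` is the fixed point of `t ↦ ½ t + ½ x`, so it lies in `[η]^α_{ε/2}` of the image
`½ K + ½ x`, which by (i) is contained in `[η]^α_{ε/2}(K)`; hence
`x ∈ [η]^{α+α}_{ε/2}(K) = [η]^{α·2}_{ε/2}(K)`, and (ii) follows by induction on `n`.
-/

open Filter Topology Set Pointwise

noncomputable section

namespace Szlenk

variable {E : Type*}

/-- The fragment derivation `[η]'_ε(A)` associated to a set function `η`:
the points of `A` all of whose neighborhoods `U` satisfy `η (A ∩ cl U) ≥ ε`. -/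
def frag [TopologicalSpace E] (η : Set E → ℝ) (ε : ℝ) (A : Set E) : Set E :=
  {x | x ∈ A ∧ ∀ U ∈ 𝓝 x, ε ≤ η (A ∩ closure U)}

/-- Transfinite iterates `[η]^γ_ε(A)` of the fragment derivation. -/
def fragIter [TopologicalSpace E] (η : Set E → ℝ) (ε : ℝ) (A : Set E) (γ : Ordinal.{0}) :
    Set E :=
  Ordinal.limitRecOn γ A (fun _ S => frag η ε S)
    (fun γ _ ih => ⋂ β : {β : Ordinal.{0} // β < γ}, ih β.1 β.2)

/-- The `ω`-iterated measure `η^ω (A) = inf {ε > 0 : [η]^ω_ε(A) = ∅}`. -/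
def etaOmega [TopologicalSpace E] (η : Set E → ℝ) (A : Set E) : ℝ :=
  sInf {ε : ℝ | 0 < ε ∧ fragIter η ε A Ordinal.omega0 = ∅}

/-- The iterates `η^{ω^n}` (with `η^{ω^0} := η` and `η^{ω^{n+1}} := (η^{ω^n})^ω`). -/
def omegaPow [TopologicalSpace E] (η : Set E → ℝ) : ℕ → Set E → ℝ
  | 0 => η
  | n + 1 => etaOmega (omegaPow η n)

/-- `η` is a measure of non compactness (with respect to the closed unit ball `ball`):
it is nonnegative, vanishes on singletons, is monotone, satisfies
`η (A ∪ B) = max (η A) (η B)`, and `η (A + l • ball) ≤ η A + l * b` for some `b > 0`.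
All conditions are required on (weak*-)compact sets only. -/
structure IsMNCOn [TopologicalSpace E] [AddCommGroup E] [Module ℝ E]
    (ball : Set E) (η : Set E → ℝ) : Prop where
  nonneg : ∀ A : Set E, IsCompact A → 0 ≤ η A
  singleton : ∀ x : E, η {x} = 0
  mono : ∀ A B : Set E, IsCompact A → IsCompact B → A ⊆ B → η A ≤ η B
  union : ∀ A B : Set E, IsCompact A → IsCompact B → η (A ∪ B) = max (η A) (η B)
  ball_add : ∃ b > 0, ∀ A : Set E, IsCompact A → ∀ l : ℝ, 0 < l →
    η (A + l • ball) ≤ η A + l * b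

/-- `η` is a measure of non compactness with the explicit constant `b` in property (iii). -/
structure IsMNCWith [TopologicalSpace E] [AddCommGroup E] [Module ℝ E]
    (ball : Set E) (b : ℝ) (η : Set E → ℝ) : Prop where
  b_pos : 0 < b
  nonneg : ∀ A : Set E, IsCompact A → 0 ≤ η A
  singleton : ∀ x : E, η {x} = 0
  mono : ∀ A B : Set E, IsCompact A → IsCompact B → A ⊆ B → η A ≤ η B
  union : ∀ A B : Set E, IsCompact A → IsCompact B → η (A ∪ B) = max (η A) (η B)
  ball_add : ∀ A : Set E, IsCompact A → ∀ l : ℝ, 0 < l →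
    η (A + l • ball) ≤ η A + l * b

/-- A sublinear measure of non compactness: homogeneous and subadditive. -/
structure IsSublinear [TopologicalSpace E] [AddCommGroup E] [Module ℝ E]
    (η : Set E → ℝ) : Prop where
  homog : ∀ (l : ℝ) (A : Set E), IsCompact A → η (l • A) = |l| * η A
  subadd : ∀ A B : Set E, IsCompact A → IsCompact B → η (A + B) ≤ η A + η B

variable {X : Type*} [NormedAddCommGroup X] [NormedSpace ℝ X]

/-- The dual norm on `X*` (the dual being equipped with its weak* topology). -/
def dnorm (f : WeakDual ℝ X) : ℝ := ‖WeakDual.toStrongDual f‖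

/-- The closed unit ball of `X*`. -/
def dualBall (X : Type*) [NormedAddCommGroup X] [NormedSpace ℝ X] :
    Set (WeakDual ℝ X) := {f | dnorm f ≤ 1}

/-- The slice derivation `⟨η⟩'_ε(A)`: the points of `A` such that every weak*-closed
halfspace containing them meets `A` in a set of `η`-measure at least `ε`. -/
def sliceD (η : Set (WeakDual ℝ X) → ℝ) (ε : ℝ) (A : Set (WeakDual ℝ X)) :
    Set (WeakDual ℝ X) :=
  {x | x ∈ A ∧ ∀ (f : X) (c : ℝ), c ≤ x f → ε ≤ η (A ∩ {y | c ≤ y f})}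

/-- Transfinite iterates `⟨η⟩^γ_ε(A)` of the slice derivation. -/
def sliceIter (η : Set (WeakDual ℝ X) → ℝ) (ε : ℝ) (A : Set (WeakDual ℝ X))
    (γ : Ordinal.{0}) : Set (WeakDual ℝ X) :=
  Ordinal.limitRecOn γ A (fun _ S => sliceD η ε S)
    (fun γ _ ih => ⋂ β : {β : Ordinal.{0} // β < γ}, ih β.1 β.2)

/-- A weak*-closed halfspace of `X*`. -/
def IsHalfspace (H : Set (WeakDual ℝ X)) : Prop :=
  ∃ (f : X) (c : ℝ), H = {y : WeakDual ℝ X | c ≤ y f}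

/-- The Kuratowski measure of non compactness associated to a (dual) norm `Nd`:
the infimum of all `ε > 0` such that `A` can be covered by finitely many balls of
diameter `ε` (i.e. of radius `ε / 2`). -/
def kurN (Nd : WeakDual ℝ X → ℝ) (A : Set (WeakDual ℝ X)) : ℝ :=
  sInf {ε : ℝ | 0 < ε ∧
    ∃ F : Finset (WeakDual ℝ X), A ⊆ ⋃ c ∈ F, {y | Nd (y - c) ≤ ε / 2}}

/-- The Kuratowski measure of non compactness on `X*`. -/
def kur (A : Set (WeakDual ℝ X)) : ℝ := kurN dnorm A

/-- The iterated sets `A^ε_β` of the convex Szlenk derivation: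
`A^ε_{β+1}` is the weak*-closed convex hull of `[σ]'_ε(A^ε_β)`. -/
def convIter (ε : ℝ) (K : Set (WeakDual ℝ X)) (γ : Ordinal.{0}) : Set (WeakDual ℝ X) :=
  Ordinal.limitRecOn γ K (fun _ S => closure (convexHull ℝ (frag kur ε S)))
    (fun γ _ ih => ⋂ β : {β : Ordinal.{0} // β < γ}, ih β.1 β.2)

/-- The families `𝒯_α` of trees on `ℕ`. A tree is a set of finite sequences of
naturals (closed under initial segments); the root is the empty sequence, and
`(n)⌢s` is represented by `n :: s`. `𝒯_0 = {{∅}}`, and `T ∈ 𝒯_α` for `α ≥ 1` if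
`T = {∅} ∪ ⋃_k (n_k)⌢T_k` with `n_k` strictly increasing, `T_k ∈ 𝒯_{α_k}`, where
`α_k = β` for all `k` if `α = β + 1`, and `α_k ↗ α` if `α` is a limit ordinal. -/
inductive IsTreeFam : Ordinal.{0} → Set (List ℕ) → Prop
  | zero : IsTreeFam 0 {[]}
  | node {α : Ordinal.{0}} (nk : ℕ → ℕ) (αk : ℕ → Ordinal.{0}) (Tk : ℕ → Set (List ℕ))
      (hnk : StrictMono nk) (hTk : ∀ k, IsTreeFam (αk k) (Tk k))
      (hα : (∃ β, α = β + 1 ∧ ∀ k, αk k = β) ∨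
            (Order.IsSuccLimit α ∧ StrictMono αk ∧ α = ⨆ k, αk k)) :
      IsTreeFam α ({[]} ∪ ⋃ k, (List.cons (nk k)) '' Tk k)

/-- A family `(x_s)_{s ∈ T}` is weak*-continuous: `x_{s⌢n} → x_s` (in the ambient,
i.e. weak*, topology) along the children of every node `s` of `T`. -/
def IsContFam [TopologicalSpace E] (T : Set (List ℕ)) (x : List ℕ → E) : Prop :=
  ∀ s ∈ T, Tendsto (fun n : ℕ => x (s ++ [n]))
    (atTop ⊓ 𝓟 {n : ℕ | s ++ [n] ∈ T}) (𝓝 (x s))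

/-- A family `(x_s)_{s ∈ T}` in `X*` is `ε`-separated: `‖x_s - x_{s⌢n}‖ ≥ ε`. -/
def IsSepFam (ε : ℝ) (T : Set (List ℕ)) (x : List ℕ → WeakDual ℝ X) : Prop :=
  ∀ s ∈ T, ∀ n : ℕ, s ++ [n] ∈ T → ε ≤ dnorm (x s - x (s ++ [n]))

/-- Norm distance from a point of `X*` to a subset of `X*`. -/
def ddist (f : WeakDual ℝ X) (A : Set (WeakDual ℝ X)) : ℝ :=
  sInf ((fun g => dnorm (f - g)) '' A)

/-- The product `η₁ × η₂` of two measures of non compactness. -/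
def prodMNC {X₁ X₂ : Type*} [NormedAddCommGroup X₁] [NormedSpace ℝ X₁]
    [NormedAddCommGroup X₂] [NormedSpace ℝ X₂]
    (η₁ : Set (WeakDual ℝ X₁) → ℝ) (η₂ : Set (WeakDual ℝ X₂) → ℝ)
    (A : Set (WeakDual ℝ X₁ × WeakDual ℝ X₂)) : ℝ :=
  sInf {ε : ℝ | 0 < ε ∧ ∃ (n : ℕ) (A₁ : Fin n → Set (WeakDual ℝ X₁))
      (A₂ : Fin n → Set (WeakDual ℝ X₂)),
      (∀ i, IsCompact (A₁ i) ∧ IsCompact (A₂ i) ∧ η₁ (A₁ i) < ε ∧ η₂ (A₂ i) < ε) ∧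
      A ⊆ ⋃ i, A₁ i ×ˢ A₂ i}

/-- The dual norm on `X*` associated to an (equivalent) norm `N` on `X`. -/
def dualNormOf (N : X → ℝ) (f : WeakDual ℝ X) : ℝ :=
  sSup ((fun x => f x) '' {x : X | N x ≤ 1})

/-- The closed unit ball of the dual norm associated to a norm `N` on `X`. -/
def dualBallOf (N : X → ℝ) : Set (WeakDual ℝ X) :=
  {f : WeakDual ℝ X | ∀ x : X, |f x| ≤ N x}

section Iterates

variable {F : Type*} [TopologicalSpace F] (η : Set F → ℝ) (ε : ℝ) (A : Set F)

lemma frag_subset : frag η ε A ⊆ A := fun _ h => h.1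

@[simp]
lemma fragIter_zero : fragIter η ε A 0 = A :=
  Ordinal.limitRecOn_zero _ _ _

@[simp]
lemma fragIter_add_one (γ : Ordinal.{0}) :
    fragIter η ε A (γ + 1) = frag η ε (fragIter η ε A γ) :=
  Ordinal.limitRecOn_add_one _ _ _ _

lemma fragIter_limit {γ : Ordinal.{0}} (hγ : Order.IsSuccLimit γ) :
    fragIter η ε A γ = ⋂ β : {β : Ordinal.{0} // β < γ}, fragIter η ε A β.1 :=
  Ordinal.limitRecOn_limit _ _ _ _ hγ

lemma fragIter_antitone : Antitone (fragIter η ε A) := by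
  intro β γ hβγ
  induction γ using Ordinal.limitRecOn with
  | zero => rw [nonpos_iff_eq_zero.mp hβγ]
  | add_one δ ih =>
    rcases hβγ.lt_or_eq with hlt | rfl
    · rw [fragIter_add_one]
      exact (frag_subset η ε _).trans (ih (Order.lt_add_one_iff.mp hlt))
    · exact subset_rfl
  | limit γ hγ _ =>
    rcases hβγ.lt_or_eq with hlt | rfl
    · rw [fragIter_limit η ε A hγ]
      exact iInter_subset (fun b : {b : Ordinal.{0} // b < γ} => fragIter η ε A b.1) ⟨β, hlt⟩
    · exact subset_rfl

lemma fragIter_subset (γ : Ordinal.{0}) : fragIter η ε A γ ⊆ A := by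
  simpa using fragIter_antitone η ε A (zero_le (a := γ))

variable {A}

lemma isClosed_frag (hA : IsClosed A) : IsClosed (frag η ε A) := by
  refine isClosed_of_closure_subset fun x hx => ?_
  refine ⟨hA.closure_subset (closure_mono (frag_subset η ε A) hx), fun U hU => ?_⟩
  obtain ⟨y, hyU, hy⟩ := mem_closure_iff_nhds.mp hx (interior U) (interior_mem_nhds.mpr hU)
  exact hy.2 U (mem_interior_iff_mem_nhds.mp hyU)

lemma isClosed_fragIter (hA : IsClosed A) (γ : Ordinal.{0}) : IsClosed (fragIter η ε A γ) := by
  induction γ using Ordinal.limitRecOn with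
  | zero => simpa using hA
  | add_one δ ih => simpa using isClosed_frag η ε ih
  | limit γ hγ ih =>
    rw [fragIter_limit η ε A hγ]
    exact isClosed_iInter fun β => ih β.1 β.2

lemma isCompact_fragIter [T2Space F] (hA : IsCompact A) (γ : Ordinal.{0}) :
    IsCompact (fragIter η ε A γ) :=
  hA.of_isClosed_subset (isClosed_fragIter η ε hA.isClosed γ) (fragIter_subset η ε A γ)

variable (A)

lemma fragIter_add (α β : Ordinal.{0}) :
    fragIter η ε A (α + β) = fragIter η ε (fragIter η ε A α) β := by
  induction β using Ordinal.limitRecOn with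
  | zero => simp
  | add_one δ ih => rw [← add_assoc, fragIter_add_one, fragIter_add_one, ih]
  | limit β hβ ih =>
    rw [fragIter_limit η ε _ hβ, fragIter_limit η ε A (Ordinal.isSuccLimit_add α hβ)]
    refine Subset.antisymm (subset_iInter fun b => ?_) (subset_iInter fun b => ?_)
    · rw [← ih b.1 b.2]
      exact iInter_subset (fun b : {b : Ordinal.{0} // b < α + β} => fragIter η ε A b.1)
        ⟨α + b.1, (add_lt_add_iff_left α).mpr b.2⟩
    · rcases le_or_gt α b.1 with hle | hlt
      · have hb : α + (b.1 - α) = b.1 := Ordinal.add_sub_cancel_of_le hle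
        have hlt : b.1 - α < β := by rw [← add_lt_add_iff_left α, hb]; exact b.2
        refine (iInter_subset _ ⟨b.1 - α, hlt⟩).trans ?_
        rw [← ih _ hlt, hb]
      · refine (iInter_subset _ ⟨0, hβ.bot_lt⟩).trans ?_
        rw [← ih 0 hβ.bot_lt, add_zero]
        exact fragIter_antitone η ε A hlt.le

end Iterates

section Image

variable {F G : Type*} [TopologicalSpace F] [TopologicalSpace G]
  {ηF : Set F → ℝ} {ηG : Set G → ℝ} {ε ε' : ℝ} {f : F → G} {S : Set F} {B : Set G}

lemma image_frag_subset
    (hmono : ∀ A B : Set G, IsCompact A → IsCompact B → A ⊆ B → ηG A ≤ ηG B)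
    (hf : Continuous f) (hfη : ∀ T, IsCompact T → ε ≤ ηF T → ε' ≤ ηG (f '' T))
    (hS : IsCompact S) (hB : IsCompact B) (hSB : f '' S ⊆ B) :
    f '' frag ηF ε S ⊆ frag ηG ε' B := by
  rintro _ ⟨x, hx, rfl⟩
  refine ⟨hSB (mem_image_of_mem f hx.1), fun U hU => ?_⟩
  have hT : IsCompact (S ∩ closure (f ⁻¹' U)) := hS.inter_right isClosed_closure
  have himage : f '' (S ∩ closure (f ⁻¹' U)) ⊆ B ∩ closure U := by
    rintro _ ⟨t, ⟨htS, htU⟩, rfl⟩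
    exact ⟨hSB (mem_image_of_mem f htS), closure_mono (image_preimage_subset f U)
      (image_closure_subset_closure_image hf (mem_image_of_mem f htU))⟩
  calc ε' ≤ ηG (f '' (S ∩ closure (f ⁻¹' U))) :=
        hfη _ hT (hx.2 _ (hf.continuousAt.preimage_mem_nhds hU))
    _ ≤ ηG (B ∩ closure U) :=
        hmono _ _ (hT.image hf) (hB.inter_right isClosed_closure) himage

lemma image_fragIter_subset [T2Space F] [T2Space G]
    (hmono : ∀ A B : Set G, IsCompact A → IsCompact B → A ⊆ B → ηG A ≤ ηG B)
    (hf : Continuous f) (hfη : ∀ T, IsCompact T → ε ≤ ηF T → ε' ≤ ηG (f '' T))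
    (hS : IsCompact S) (hB : IsCompact B) (hSB : f '' S ⊆ B) (γ : Ordinal.{0}) :
    f '' fragIter ηF ε S γ ⊆ fragIter ηG ε' B γ := by
  induction γ using Ordinal.limitRecOn with
  | zero => simpa using hSB
  | add_one δ ih =>
    simpa using image_frag_subset hmono hf hfη (isCompact_fragIter ηF ε hS δ)
      (isCompact_fragIter ηG ε' hB δ) ih
  | limit γ hγ ih =>
    rw [fragIter_limit ηF ε S hγ, fragIter_limit ηG ε' B hγ]
    exact (image_iInter_subset _ _).trans (iInter_mono fun β => ih β.1 β.2)

lemma fragIter_mono [T2Space F] {η : Set F → ℝ}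
    (hmono : ∀ A B : Set F, IsCompact A → IsCompact B → A ⊆ B → η A ≤ η B)
    {A B : Set F} (hA : IsCompact A) (hB : IsCompact B) (hAB : A ⊆ B) (γ : Ordinal.{0}) :
    fragIter η ε A γ ⊆ fragIter η ε B γ := by
  simpa using image_fragIter_subset (f := id) hmono continuous_id (fun _ _ h => by simpa using h)
    hA hB (by simpa using hAB) γ

end Image

section Halving

variable {F : Type*} [TopologicalSpace F] [AddCommGroup F] [Module ℝ F]
  [ContinuousConstSMul ℝ F] {η : Set F → ℝ}

lemma eta_image_smul_add
    (hhom : ∀ (l : ℝ) (A : Set F), IsCompact A → η (l • A) = |l| * η A)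
    (htrans : ∀ (x : F) (A : Set F), IsCompact A → η ((fun a => a + x) '' A) = η A)
    (r : ℝ) (c : F) {T : Set F} (hT : IsCompact T) :
    η ((fun t => r • t + c) '' T) = |r| * η T := by
  have hrT : IsCompact (r • T) := by
    rw [← image_smul]; exact hT.image (continuous_const_smul r)
  rw [← hhom r T hT, ← htrans c _ hrT, ← image_smul, image_image]

variable [ContinuousAdd F] [T2Space F]

lemma image_fragIter_half_smul_add_subset
    (hmono : ∀ A B : Set F, IsCompact A → IsCompact B → A ⊆ B → η A ≤ η B)
    (hhom : ∀ (l : ℝ) (A : Set F), IsCompact A → η (l • A) = |l| * η A)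
    (htrans : ∀ (x : F) (A : Set F), IsCompact A → η ((fun a => a + x) '' A) = η A)
    (c : F) {S B : Set F} (hS : IsCompact S) (hB : IsCompact B)
    (hSB : (fun t => (2⁻¹ : ℝ) • t + c) '' S ⊆ B) (ε : ℝ) (γ : Ordinal.{0}) :
    (fun t => (2⁻¹ : ℝ) • t + c) '' fragIter η ε S γ ⊆ fragIter η (ε / 2) B γ := by
  refine image_fragIter_subset hmono (by fun_prop) (fun T hT hεT => ?_) hS hB hSB γ
  rw [eta_image_smul_add hhom htrans _ c hT, abs_of_pos (by norm_num)]
  linarith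

variable {K : Set F}

lemma half_smul_add_half_smul_mem_fragIter
    (hmono : ∀ A B : Set F, IsCompact A → IsCompact B → A ⊆ B → η A ≤ η B)
    (hhom : ∀ (l : ℝ) (A : Set F), IsCompact A → η (l • A) = |l| * η A)
    (htrans : ∀ (x : F) (A : Set F), IsCompact A → η ((fun a => a + x) '' A) = η A)
    (hK : IsCompact K) (hKc : Convex ℝ K) (ε : ℝ) (α : Ordinal.{0})
    {x y : F} (hx : x ∈ fragIter η ε K α) (hy : y ∈ K) :
    (2⁻¹ : ℝ) • x + (2⁻¹ : ℝ) • y ∈ fragIter η (ε / 2) K α := by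
  have hKK : (fun t => (2⁻¹ : ℝ) • t + (2⁻¹ : ℝ) • y) '' K ⊆ K := by
    rintro _ ⟨t, ht, rfl⟩
    exact hKc ht hy (by norm_num) (by norm_num) (by norm_num)
  exact image_fragIter_half_smul_add_subset hmono hhom htrans _ hK hK hKK ε α
    (mem_image_of_mem _ hx)

lemma fragIter_subset_fragIter_add_self
    (hmono : ∀ A B : Set F, IsCompact A → IsCompact B → A ⊆ B → η A ≤ η B)
    (hhom : ∀ (l : ℝ) (A : Set F), IsCompact A → η (l • A) = |l| * η A)
    (htrans : ∀ (x : F) (A : Set F), IsCompact A → η ((fun a => a + x) '' A) = η A)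
    (hK : IsCompact K) (hKc : Convex ℝ K) (ε : ℝ) (α : Ordinal.{0}) :
    fragIter η ε K α ⊆ fragIter η (ε / 2) K (α + α) := by
  intro x hx
  set φ : F → F := fun t => (2⁻¹ : ℝ) • t + (2⁻¹ : ℝ) • x
  have hφx : φ x = x := by simp only [φ, ← add_smul]; norm_num
  have hφK : φ '' K ⊆ fragIter η (ε / 2) K α := by
    rintro _ ⟨y, hy, rfl⟩
    rw [show φ y = (2⁻¹ : ℝ) • x + (2⁻¹ : ℝ) • y from add_comm _ _]
    exact half_smul_add_half_smul_mem_fragIter hmono hhom htrans hK hKc ε α hx hy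
  have hφK_compact : IsCompact (φ '' K) := hK.image (by fun_prop)
  have hx' : x ∈ fragIter η (ε / 2) (φ '' K) α := hφx ▸
    image_fragIter_half_smul_add_subset hmono hhom htrans _ hK hφK_compact subset_rfl ε α
      (mem_image_of_mem φ hx)
  rw [fragIter_add]
  exact fragIter_mono hmono hφK_compact (isCompact_fragIter η (ε / 2) hK α) hφK α hx'

end Halving

theorem fragIter_convex_combination_general
    {X : Type*} [NormedAddCommGroup X] [NormedSpace ℝ X]
    (η : Set (WeakDual ℝ X) → ℝ) (hη : IsMNCOn (dualBall X) η)
    (hhom : ∀ (l : ℝ) (A : Set (WeakDual ℝ X)), IsCompact A → η (l • A) = |l| * η A)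
    (htrans : ∀ (x : WeakDual ℝ X) (A : Set (WeakDual ℝ X)), IsCompact A →
      η ((fun a => a + x) '' A) = η A)
    (K : Set (WeakDual ℝ X)) (hK : IsCompact K) (hKc : Convex ℝ K) :
    (∀ ε : ℝ, 0 < ε → ∀ α : Ordinal.{0},
      (2⁻¹ : ℝ) • fragIter η ε K α + (2⁻¹ : ℝ) • K ⊆ fragIter η (ε / 2) K α) ∧
    (∀ ε : ℝ, 0 < ε → ∀ (n : ℕ) (α : Ordinal.{0}),
      fragIter η ε K α ⊆ fragIter η (ε / 2 ^ n) K (α * 2 ^ n)) := by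
  refine ⟨fun ε _ α => ?_, fun ε _ n α => ?_⟩
  · rintro _ ⟨_, ⟨x, hx, rfl⟩, _, ⟨y, hy, rfl⟩, rfl⟩
    exact half_smul_add_half_smul_mem_fragIter hη.mono hhom htrans hK hKc ε α hx hy
  · induction n with
    | zero => simp
    | succ n ih =>
      refine ih.trans ?_
      rw [pow_succ, ← div_div, pow_succ, ← mul_assoc, Ordinal.mul_two]
      exact fragIter_subset_fragIter_add_self hη.mono hhom htrans hK hKc _ _

/-- Let `K` be a convex weak*-compact subset of `X*` and `η` a homogeneous and
translation-invariant measure of non compactness on `X*`. Then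
(i) `½ [η]^α_ε(K) + ½ K ⊆ [η]^α_{ε/2}(K)` for every `ε > 0` and ordinal `α`;
(ii) `[η]^α_ε(K) ⊆ [η]^{α·2ⁿ}_{ε/2ⁿ}(K)` for every `ε > 0`, `n ∈ ℕ` and ordinal `α`. -/
theorem fragIter_convex_combination
    {X : Type*} [NormedAddCommGroup X] [NormedSpace ℝ X] [CompleteSpace X]
    (η : Set (WeakDual ℝ X) → ℝ) (hη : IsMNCOn (dualBall X) η)
    (hhom : ∀ (l : ℝ) (A : Set (WeakDual ℝ X)), IsCompact A → η (l • A) = |l| * η A)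
    (htrans : ∀ (x : WeakDual ℝ X) (A : Set (WeakDual ℝ X)), IsCompact A →
      η ((fun a => a + x) '' A) = η A)
    (K : Set (WeakDual ℝ X)) (hK : IsCompact K) (hKc : Convex ℝ K) :
    (∀ ε : ℝ, 0 < ε → ∀ α : Ordinal.{0},
      (2⁻¹ : ℝ) • fragIter η ε K α + (2⁻¹ : ℝ) • K ⊆ fragIter η (ε / 2) K α) ∧
    (∀ ε : ℝ, 0 < ε → ∀ (n : ℕ) (α : Ordinal.{0}),
      fragIter η ε K α ⊆ fragIter η (ε / 2 ^ n) K (α * 2 ^ n)) :=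
  fragIter_convex_combination_general η hη hhom htrans K hK hKc

end Szlenk
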